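/- arXiv:0909.0171 — 10 statements merged into one kernel-verified Lean document; each statement's English description precedes it below -/
import Mathlib

section
/- The complete lattice C-Idl(P) of C-ideals of a suplattice presentation ⟨P; ⊑, C⟩, together with the map η : x ↦ ⟨x⟩, is the suplattice freely generated by the presentation: η preserves covers, and every cover-preserving order-preserving map f from P to a suplattice D factors uniquely through η via a join-preserving map. -/
section Pres
variable {P : Type*} [Preorder P]

/-- A `C`-ideal: downward closed and closed under covers. -/
def IsCIdeal (C : P → Set P → Prop) (X : Set P) : Prop :=
  (∀ x ∈ X, ∀ y, y ≤ x → y ∈ X) ∧ ∀ x U, C x U → U ⊆ X → x ∈ X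

/-- The collection of `C`-ideals, ordered by inclusion. -/
abbrev CIdl (C : P → Set P → Prop) : Type _ := {X : Set P // IsCIdeal C X}

/-- The `C`-ideal generated by a set. -/
def genC (C : P → Set P → Prop) (S : Set P) : Set P := ⋂₀ {X | IsCIdeal C X ∧ S ⊆ X}

lemma isCIdeal_sInter (C : P → Set P → Prop) (T : Set (Set P))
    (hT : ∀ X ∈ T, IsCIdeal C X) : IsCIdeal C (⋂₀ T) := by
  refine ⟨?_, ?_⟩
  · intro x hx y hyx
    rw [Set.mem_sInter] at *
    intro X hX
    exact (hT X hX).1 x (hx X hX) y hyx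
  · intro x U hU hsub
    rw [Set.mem_sInter]
    intro X hX
    exact (hT X hX).2 x U hU fun u hu => Set.mem_sInter.mp (hsub hu) X hX

lemma isCIdeal_genC (C : P → Set P → Prop) (S : Set P) : IsCIdeal C (genC C S) :=
  isCIdeal_sInter C _ fun _ hX => hX.1

lemma subset_genC (C : P → Set P → Prop) (S : Set P) : S ⊆ genC C S :=
  fun _ hs => Set.mem_sInter.mpr fun _ hX => hX.2 hs

noncomputable instance instInfCIdl (C : P → Set P → Prop) : InfSet (CIdl C) :=
  ⟨fun S => ⟨⋂₀ (Subtype.val '' S),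
    isCIdeal_sInter C _ (by rintro X ⟨Y, _, rfl⟩; exact Y.2)⟩⟩

noncomputable instance instCompleteLatticeCIdl (C : P → Set P → Prop) :
    CompleteLattice (CIdl C) :=
  completeLatticeOfInf _ (by
    intro S
    constructor
    · intro X hX
      exact fun a ha => Set.mem_sInter.mp ha X.1 ⟨X, hX, rfl⟩
    · intro Y hY a ha
      refine Set.mem_sInter.mpr ?_
      rintro Z ⟨X, hX, rfl⟩
      exact hY hX ha)

/-- The natural map `x ↦ ⟨x⟩` from a presentation into its `C`-ideals. -/
def etaC (C : P → Set P → Prop) (x : P) : CIdl C := ⟨genC C {x}, isCIdeal_genC C _⟩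

/-- The free dcpo over a dcpo presentation: the least family of `C`-ideals containing
all principal `C`-ideals and closed under directed joins. -/
def OverC (C : P → Set P → Prop) : Set (CIdl C) :=
  ⋂₀ {Y | (∀ x, etaC C x ∈ Y) ∧
      ∀ S ⊆ Y, S.Nonempty → DirectedOn (· ≤ ·) S → sSup S ∈ Y}

end Pres

section Filt
variable {A : Type*}

/-- `F` is a filter: nonempty, upward closed, downward directed. -/
def IsFilt [Preorder A] (F : Set A) : Prop :=
  F.Nonempty ∧ (∀ a ∈ F, ∀ b, a ≤ b → b ∈ F) ∧
    ∀ a ∈ F, ∀ b ∈ F, ∃ c ∈ F, c ≤ a ∧ c ≤ b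

/-- `I` is an ideal: nonempty, downward closed, upward directed. -/
def IsIdl [Preorder A] (I : Set A) : Prop :=
  I.Nonempty ∧ (∀ a ∈ I, ∀ b, b ≤ a → b ∈ I) ∧
    ∀ a ∈ I, ∀ b ∈ I, ∃ c ∈ I, a ≤ c ∧ b ≤ c

/-- The free co-directed meet completion of `A`: filters ordered by reverse inclusion. -/
def FComp (A : Type u) [Preorder A] : Type u := {F : Set A // IsFilt F}

instance [Preorder A] : PartialOrder (FComp A) where
  le x y := y.1 ⊆ x.1
  le_refl x := subset_rfl
  le_trans x y z h1 h2 := Set.Subset.trans h2 h1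
  le_antisymm x y h1 h2 := Subtype.ext (subset_antisymm h2 h1)

/-- The embedding `↑ : A → ℱ(A)` sending `a` to the principal filter. -/
def pf [Preorder A] (a : A) : FComp A :=
  ⟨{b | a ≤ b}, ⟨a, le_refl a⟩, fun x hx b hb => le_trans hx hb,
    fun x hx y hy => ⟨a, le_refl a, hx, hy⟩⟩

noncomputable instance [Lattice A] [BoundedOrder A] : InfSet (FComp A) :=
  ⟨fun S => ⟨⋂₀ {F | IsFilt F ∧ ∀ x ∈ S, x.1 ⊆ F}, by
    refine ⟨⟨⊤, ?_⟩, ?_, ?_⟩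
    · refine Set.mem_sInter.mpr ?_
      rintro F ⟨⟨⟨w, hw⟩, hup, _⟩, _⟩
      exact hup w hw ⊤ le_top
    · intro a ha b hab
      refine Set.mem_sInter.mpr fun F hF => ?_
      exact hF.1.2.1 a (Set.mem_sInter.mp ha F hF) b hab
    · intro a ha b hb
      refine ⟨a ⊓ b, ?_, inf_le_left, inf_le_right⟩
      refine Set.mem_sInter.mpr fun F hF => ?_
      obtain ⟨c, hc, hca, hcb⟩ :=
        hF.1.2.2 a (Set.mem_sInter.mp ha F hF) b (Set.mem_sInter.mp hb F hF)
      exact hF.1.2.1 c hc (a ⊓ b) (le_inf hca hcb)⟩⟩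

noncomputable instance [Lattice A] [BoundedOrder A] : CompleteLattice (FComp A) :=
  completeLatticeOfInf _ (by
    intro S
    constructor
    · intro x hx
      show x.1 ⊆ (sInf S).1
      intro a ha
      exact Set.mem_sInter.mpr fun F hF => hF.2 x hx ha
    · intro y hY
      show (sInf S).1 ⊆ y.1
      intro a ha
      exact Set.mem_sInter.mp ha y.1 ⟨y.2, fun x hx => hY hx⟩)

/-- The lifting of a monotone map to the filter completions. -/
def liftF {ι : Type*} {A : ι → Type*} {B : Type*} [∀ i, Preorder (A i)] [Preorder B]
    (f : (∀ i, A i) → B) (hf : Monotone f) (x : ∀ i, FComp (A i)) : FComp B :=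
  ⟨{b | ∃ a : ∀ i, A i, (∀ i, a i ∈ (x i).1) ∧ f a ≤ b}, by
    refine ⟨?_, ?_, ?_⟩
    · exact ⟨f (fun i => ((x i).2.1).choose), fun i => ((x i).2.1).choose,
        fun i => ((x i).2.1).choose_spec, le_rfl⟩
    · rintro b ⟨a, ha, hab⟩ c hbc
      exact ⟨a, ha, hab.trans hbc⟩
    · rintro b ⟨a1, ha1, h1⟩ c ⟨a2, ha2, h2⟩
      choose g hg hga1 hga2 using fun i => (x i).2.2.2 (a1 i) (ha1 i) (a2 i) (ha2 i)
      exact ⟨f g, ⟨g, hg, le_rfl⟩, (hf fun i => hga1 i).trans h1,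
        (hf fun i => hga2 i).trans h2⟩⟩

/-- The co-Scott continuous extension of binary join to the filter completion. -/
def supF [Lattice A] (x y : FComp A) : FComp A :=
  liftF (A := fun _ : Fin 2 => A) (fun a => a 0 ⊔ a 1)
    (fun _ _ hab => sup_le_sup (hab 0) (hab 1)) ![x, y]

/-- The co-Scott continuous extension of binary meet to the filter completion. -/
def infF [Lattice A] (x y : FComp A) : FComp A :=
  liftF (A := fun _ : Fin 2 => A) (fun a => a 0 ⊓ a 1)
    (fun _ _ hab => inf_le_inf (hab 0) (hab 1)) ![x, y]

/-- A map is co-Scott continuous if it preserves meets of nonempty co-directed sets. -/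
def CoScottCont {α β : Type*} [Preorder α] [Preorder β] (g : α → β) : Prop :=
  ∀ S : Set α, S.Nonempty → DirectedOn (· ≥ ·) S → ∀ x, IsGLB S x → IsGLB (g '' S) (g x)

/-- A map is Scott continuous if it preserves joins of nonempty directed sets. -/
def ScottContOn {α β : Type*} [Preorder α] [Preorder β] (T : Set α) (g : α → β) : Prop :=
  ∀ S ⊆ T, S.Nonempty → DirectedOn (· ≤ ·) S → ∀ x, IsLUB S x → IsLUB (g '' S) (g x)

/-- The covering relation `C_A` of the dcpo presentation `Δ(A)` on `ℱ(A)`. -/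
def covD [Preorder A] (x : FComp A) (U : Set (FComp A)) : Prop :=
  U.Nonempty ∧ DirectedOn (· ≤ ·) U ∧
    ∀ I : Set A, IsIdl I → (∀ x' ∈ U, ∃ a' ∈ I, x' ≤ pf a') → ∃ a ∈ I, x ≤ pf a

/-- `e : A → C` is a canonical extension: a dense and compact lattice completion. -/
def IsCanExt {A C : Type*} [Lattice A] [CompleteLattice C] (e : A → C) : Prop :=
  (∀ a b, e a ≤ e b ↔ a ≤ b) ∧
  (∀ a b, e (a ⊔ b) = e a ⊔ e b) ∧
  (∀ a b, e (a ⊓ b) = e a ⊓ e b) ∧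
  (∀ u v : C, ¬ u ≤ v → ∃ F I : Set A, IsFilt F ∧ IsIdl I ∧
    sInf (e '' F) ≤ u ∧ ¬ sInf (e '' F) ≤ v ∧ v ≤ sSup (e '' I) ∧ ¬ u ≤ sSup (e '' I)) ∧
  (∀ F I : Set A, IsFilt F → IsIdl I → sInf (e '' F) ≤ sSup (e '' I) →
    ∃ b ∈ F, ∃ a ∈ I, b ≤ a)

/-- `f` is an operator: it preserves binary joins in each coordinate. -/
def IsOperator {ι : Type*} [DecidableEq ι] {A : ι → Type*} {B : Type*}
    [∀ i, Lattice (A i)] [Lattice B] (f : (∀ i, A i) → B) : Prop :=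
  ∀ (a : ∀ i, A i) (i : ι) (b : A i),
    f (Function.update a i (a i ⊔ b)) = f a ⊔ f (Function.update a i b)

end Filt

section Terms

/-- Terms over a signature `Ω` with arities `ar`, in `n` variables. -/
inductive OTerm (Ω : Type*) (ar : Ω → ℕ) (n : ℕ) : Type _ where
  | var : Fin n → OTerm Ω ar n
  | op : (ω : Ω) → (Fin (ar ω) → OTerm Ω ar n) → OTerm Ω ar n

/-- Evaluation of a term under an interpretation of the operation symbols. -/
def evalT {Ω : Type*} {ar : Ω → ℕ} {n : ℕ} {A : Type*}
    (interp : ∀ ω, (Fin (ar ω) → A) → A) (v : Fin n → A) : OTerm Ω ar n → A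
  | .var i => v i
  | .op ω args => interp ω (fun j => evalT interp v (args j))

end Terms

/-!
Every `C`-ideal is the join of the principal ideals `⟨p⟩` of its elements, which forces
uniqueness. For existence, `X ↦ ⋁ f[X]` is left adjoint to `d ↦ {p | f p ≤ d}`; the latter is a
`C`-ideal exactly because `f` is monotone and preserves covers, so the extension preserves all
joins.
-/

section FreeSuplattice
variable {P : Type*} [Preorder P] {C : P → Set P → Prop}

lemma genC_subset {S X : Set P} (hX : IsCIdeal C X) (hS : S ⊆ X) : genC C S ⊆ X :=
  fun _ hp => Set.mem_sInter.mp hp X ⟨hX, hS⟩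

lemma mem_etaC_self (x : P) : x ∈ (etaC C x).1 :=
  subset_genC C {x} rfl

lemma etaC_le_iff {x : P} {X : CIdl C} : etaC C x ≤ X ↔ x ∈ X.1 :=
  ⟨fun h => h (mem_etaC_self x), fun h => genC_subset X.2 (Set.singleton_subset_iff.mpr h)⟩

lemma monotone_etaC : Monotone (etaC C) := fun _ y hxy =>
  etaC_le_iff.mpr ((etaC C y).2.1 y (mem_etaC_self y) _ hxy)

lemma etaC_le_sSup_image_of_cover {x : P} {U : Set P} (hxU : C x U) :
    etaC C x ≤ sSup (etaC C '' U) :=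
  etaC_le_iff.mpr <| (sSup (etaC C '' U)).2.2 x U hxU fun u hu =>
    (le_sSup (Set.mem_image_of_mem _ hu) : etaC C u ≤ _) (mem_etaC_self u)

lemma sSup_image_etaC (X : CIdl C) : sSup (etaC C '' X.1) = X :=
  le_antisymm (sSup_le <| Set.forall_mem_image.mpr fun _ => etaC_le_iff.mpr)
    fun p hp => (le_sSup (Set.mem_image_of_mem _ hp) : etaC C p ≤ _) (mem_etaC_self p)

namespace CIdl
variable {D : Type*} [CompleteLattice D] {f : P → D}

def lift (f : P → D) (X : CIdl C) : D := sSup (f '' X.1)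

def preimageIic (hf : Monotone f) (hfC : ∀ x U, C x U → f x ≤ sSup (f '' U)) (d : D) :
    CIdl C :=
  ⟨{p | f p ≤ d}, fun _ hx _ hyx => (hf hyx).trans hx, fun x U hxU hU =>
    (hfC x U hxU).trans (sSup_le <| Set.forall_mem_image.mpr hU)⟩

lemma gc_lift_preimageIic (hf : Monotone f) (hfC : ∀ x U, C x U → f x ≤ sSup (f '' U)) :
    GaloisConnection (lift (C := C) f) (preimageIic hf hfC) := fun _ _ =>
  sSup_le_iff.trans Set.forall_mem_image

lemma lift_sSup (hf : Monotone f) (hfC : ∀ x U, C x U → f x ≤ sSup (f '' U))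
    (T : Set (CIdl C)) : lift f (sSup T) = sSup (lift f '' T) := by
  rw [(gc_lift_preimageIic hf hfC).l_sSup, sSup_image]

lemma lift_etaC (hf : Monotone f) (hfC : ∀ x U, C x U → f x ≤ sSup (f '' U)) (x : P) :
    lift f (etaC C x) = f x :=
  le_antisymm ((gc_lift_preimageIic hf hfC).le_iff_le.mpr (etaC_le_iff.mpr le_rfl))
    (le_sSup (Set.mem_image_of_mem f (mem_etaC_self x)))

lemma eq_lift {g : CIdl C → D} (hg : ∀ T : Set (CIdl C), g (sSup T) = sSup (g '' T))
    (hgf : ∀ x, g (etaC C x) = f x) : g = lift f := by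
  funext X
  calc g X = g (sSup (etaC C '' X.1)) := by rw [sSup_image_etaC]
    _ = lift f X := by rw [hg, Set.image_image]; simp only [hgf, lift]

end CIdl

end FreeSuplattice

/-- `C-Idl(P)` with `η : x ↦ ⟨x⟩` is the suplattice freely generated by the
suplattice presentation `⟨P; ⊑, C⟩`. -/
theorem statement2 {P : Type*} [Preorder P] (C : P → Set P → Prop) :
    Monotone (etaC C) ∧
    (∀ x U, C x U → etaC C x ≤ sSup (etaC C '' U)) ∧
    ∀ (D : Type*) [CompleteLattice D] (f : P → D), Monotone f →
      (∀ x U, C x U → f x ≤ sSup (f '' U)) →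
      ∃! g : CIdl C → D, (∀ T : Set (CIdl C), g (sSup T) = sSup (g '' T)) ∧
        ∀ x, g (etaC C x) = f x :=
  ⟨monotone_etaC, fun _ _ => etaC_le_sSup_image_of_cover, fun _ _ _ hf hfC =>
    ⟨CIdl.lift _, ⟨CIdl.lift_sSup hf hfC, CIdl.lift_etaC hf hfC⟩,
      fun _ hg => CIdl.eq_lift hg.1 hg.2⟩⟩
end

section
/- Let ⟨P; ⊑, C, (ω_P)⟩ be a dcpo presentation which is also a preordered Ω-algebra with all basic operations cover-stable. Then the free dcpo P̄ carries an Ω-algebra structure via the lifted operations, and every inequation s ≼ t between Ω-terms valid in P remains valid in P̄. -/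
/-- The lifting of a `k`-ary operation on `P` to the C-ideals. -/
def opLift {P : Type*} [Preorder P] (C : P → Set P → Prop) {k : ℕ}
    (g : (Fin k → P) → P) (X : Fin k → CIdl C) : CIdl C :=
  ⟨genC C {b | ∃ x : Fin k → P, (∀ i, x i ∈ (X i).1) ∧ b = g x}, isCIdeal_genC C _⟩

/-!
Cover-stability of `g` says that, with all arguments but one fixed, `{z | g (…, z, …) ∈ Y}` is a
`C`-ideal whenever `Y` is. Hence `ḡ (X₁, …, Xₖ)` is already generated by the values of `g` on
generators of the `Xᵢ`. This gives `ḡ (↓x₁, …, ↓xₖ) = ↓(g x)`, and, since the join of a directed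
family of `C`-ideals is generated by their union and the arity is finite, Scott continuity of `ḡ`
and then of every term function. The free dcpo is the least directed-complete family containing
the principal ideals, so both claims follow by varying one argument at a time: they hold on
principal ideals, and they survive directed joins (for the inequation, because the left side is
Scott continuous and the right side monotone).
-/

open Function

theorem pi_induction_of_mem_sInter {ι α : Type*} [Fintype ι] [DecidableEq ι]
    {Closed : Set α → Prop} {B : ι → Set α} {Q : (ι → α) → Prop}
    (base : ∀ x, (∀ i, x i ∈ B i) → Q x) (step : ∀ x i, Closed {z | Q (update x i z)})
    {x : ι → α} (hx : ∀ i, x i ∈ ⋂₀ {Y | Closed Y ∧ B i ⊆ Y}) : Q x := by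
  suffices h : ∀ s : Finset ι, ∀ y, (∀ i ∈ s, y i ∈ ⋂₀ {Y | Closed Y ∧ B i ⊆ Y}) →
      (∀ i ∉ s, y i ∈ B i) → Q y from
    h Finset.univ x (fun i _ => hx i) fun i hi => absurd (Finset.mem_univ i) hi
  intro s
  induction s using Finset.induction with
  | empty => exact fun y _ hB => base y fun i => hB i (Finset.notMem_empty i)
  | @insert a s ha ih =>
    intro y hcl hB
    have hBa : B a ⊆ {z | Q (update y a z)} := fun z hz => by
      refine ih _ (fun i hi => ?_) (fun i hi => ?_)
      · rw [update_of_ne (ne_of_mem_of_not_mem hi ha)]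
        exact hcl i (Finset.mem_insert_of_mem hi)
      · rcases eq_or_ne i a with rfl | hia
        · simpa using hz
        · rw [update_of_ne hia]
          exact hB i (by simp [hia, hi])
    have hya : y a ∈ {z | Q (update y a z)} :=
      Set.sInter_subset_of_mem (S := {Y | Closed Y ∧ B a ⊆ Y}) ⟨step y a, hBa⟩
        (hcl a (Finset.mem_insert_self a s))
    simpa using hya

section ScottContinuous

variable {α : Type*} {ι : Type*} {π : ι → Type*} [Preorder α] [∀ i, Preorder (π i)]

theorem scottContinuous_apply (i : ι) : ScottContinuous fun f : ∀ i, π i => f i :=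
  fun _ _ _ _ ha => isLUB_pi.1 ha i

theorem ScottContinuous.pi {f : α → ∀ i, π i} (hf : ∀ i, ScottContinuous fun a => f a i) :
    ScottContinuous f := fun d hne hdir _ ha =>
  isLUB_pi.2 fun i => by simpa only [Set.image_image] using hf i hne hdir ha

theorem scottContinuous_update [DecidableEq ι] (f : ∀ i, π i) (i : ι) :
    ScottContinuous (update f i) := by
  refine ScottContinuous.pi fun j => ?_
  rcases eq_or_ne j i with rfl | hj
  · simp only [update_self]
    exact ScottContinuous.id
  · simp only [update_of_ne hj]
    exact ScottContinuous.const (f j)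

theorem DirSupClosed.preimage {β : Type*} [Preorder β] {s : Set β} {f : α → β}
    (hs : DirSupClosed s) (hf : ScottContinuous f) : DirSupClosed (f ⁻¹' s) :=
  fun _ hds hne hdir _ ha =>
    hs (Set.image_subset_iff.2 hds) (hne.image f) (hdir.mono_comp hf.monotone) (hf hne hdir ha)

theorem dirSupClosed_setOf_le {β : Type*} [Preorder β] {f g : α → β} (hf : ScottContinuous f)
    (hg : Monotone g) : DirSupClosed {a | f a ≤ g a} := by
  intro d hd hne hdir a ha
  refine (hf hne hdir ha).2 ?_
  rintro _ ⟨b, hb, rfl⟩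
  exact (hd hb).trans (hg (ha.1 hb))

end ScottContinuous

def CoverStable {P ι : Type*} [DecidableEq ι] (C : P → Set P → Prop) (g : (ι → P) → P) : Prop :=
  ∀ x i U, C (x i) U → C (g x) ((fun y => g (update x i y)) '' U)

namespace CIdl

variable {P : Type*} [Preorder P] {C : P → Set P → Prop} {k : ℕ} {g : (Fin k → P) → P}

theorem genC_subset {S Y : Set P} (hY : IsCIdeal C Y) (hSY : S ⊆ Y) : genC C S ⊆ Y :=
  Set.sInter_subset_of_mem ⟨hY, hSY⟩

theorem etaC_le_iff {a : P} {Y : CIdl C} : etaC C a ≤ Y ↔ a ∈ Y.1 :=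
  ⟨fun h => h (subset_genC C {a} rfl), fun h => genC_subset Y.2 (Set.singleton_subset_iff.2 h)⟩

theorem etaC_mono : Monotone (etaC C) := fun _ b h =>
  etaC_le_iff.2 ((isCIdeal_genC C {b}).1 b (subset_genC C {b} rfl) _ h)

theorem val_sSup (𝒮 : Set (CIdl C)) : (sSup 𝒮).1 = genC C (⋃ X ∈ 𝒮, X.1) := by
  have hlub : IsLUB 𝒮 (⟨genC C (⋃ X ∈ 𝒮, X.1), isCIdeal_genC C _⟩ : CIdl C) :=
    ⟨fun X hX => (Set.subset_biUnion_of_mem hX).trans (subset_genC C _),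
      fun Y hY => genC_subset Y.2 (Set.iUnion₂_subset fun _ hX => hY hX)⟩
  rw [(isLUB_sSup 𝒮).unique hlub]

theorem opLift_le_iff {X : Fin k → CIdl C} {Y : CIdl C} :
    opLift C g X ≤ Y ↔ ∀ x : Fin k → P, (∀ i, x i ∈ (X i).1) → g x ∈ Y.1 :=
  ⟨fun h x hx => h (subset_genC C _ ⟨x, hx, rfl⟩),
    fun h => genC_subset Y.2 (by rintro _ ⟨x, hx, rfl⟩; exact h x hx)⟩

theorem opLift_mono : Monotone (opLift C g) :=
  fun _ _ h => opLift_le_iff.2 fun x hx => subset_genC C _ ⟨x, fun i => h i (hx i), rfl⟩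

theorem isCIdeal_setOf_update (hg : Monotone g) (hst : CoverStable C g) {Y : Set P}
    (hY : IsCIdeal C Y) (x : Fin k → P) (i : Fin k) :
    IsCIdeal C {z | g (update x i z) ∈ Y} := by
  refine ⟨fun z hz z' hz' => hY.1 _ hz _ (hg (update_mono hz')), fun z U hU hUY => ?_⟩
  have hcov := hst (update x i z) i U (by simpa using hU)
  simp only [update_idem] at hcov
  exact hY.2 _ _ hcov (by rintro _ ⟨w, hw, rfl⟩; exact hUY hw)

theorem opLift_le_of_subset_genC (hg : Monotone g) (hst : CoverStable C g)
    {X : Fin k → CIdl C} {S : Fin k → Set P} {Y : CIdl C} (hX : ∀ i, (X i).1 ⊆ genC C (S i))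
    (h : ∀ x : Fin k → P, (∀ i, x i ∈ S i) → g x ∈ Y.1) : opLift C g X ≤ Y :=
  opLift_le_iff.2 fun _ hy =>
    pi_induction_of_mem_sInter h (isCIdeal_setOf_update hg hst Y.2) fun i => hX i (hy i)

theorem opLift_etaC (hg : Monotone g) (hst : CoverStable C g) (x : Fin k → P) :
    opLift C g (fun i => etaC C (x i)) = etaC C (g x) := by
  refine le_antisymm (opLift_le_of_subset_genC hg hst (S := fun i => {x i}) (fun _ => subset_rfl)
    fun y hy => ?_) (etaC_le_iff.2 (subset_genC C _ ⟨x, fun i => subset_genC C _ rfl, rfl⟩))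
  obtain rfl : y = x := funext hy
  exact subset_genC C _ rfl

theorem scottContinuous_opLift (hg : Monotone g) (hst : CoverStable C g) :
    ScottContinuous (opLift C g) := by
  intro 𝒟 hne hdir L hL
  refine ⟨Set.forall_mem_image.2 fun V hV => opLift_mono (hL.1 hV), fun W hW => ?_⟩
  have hLi : ∀ i, (L i).1 = genC C (⋃ V ∈ 𝒟, (V i).1) := fun i => by
    rw [(isLUB_pi.1 hL i).unique (isLUB_sSup _), val_sSup, Set.biUnion_image]
  refine opLift_le_of_subset_genC hg hst (fun i => (hLi i).subset) fun x hx => ?_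
  choose V hV hxV using fun i => Set.mem_iUnion₂.1 (hx i)
  have := hne.to_subtype
  obtain ⟨U, hU⟩ := hdir.directed_val.finset_le (Finset.univ.image fun i => (⟨V i, hV i⟩ : 𝒟))
  have hle : ∀ i, V i ≤ U.1 := fun i => hU _ (Finset.mem_image_of_mem _ (Finset.mem_univ i))
  exact hW ⟨U.1, U.2, rfl⟩ (subset_genC C _ ⟨x, fun i => hle i i (hxV i), rfl⟩)

theorem etaC_mem_OverC (x : P) : etaC C x ∈ OverC C :=
  Set.mem_sInter.2 fun _ hY => hY.1 x

theorem dirSupClosed_OverC : DirSupClosed (OverC C) := by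
  intro 𝒮 h𝒮 hne hdir _ ha
  rw [ha.unique (isLUB_sSup 𝒮)]
  exact Set.mem_sInter.2 fun Y hY => hY.2 𝒮 (fun Z hZ => Set.mem_sInter.1 (h𝒮 hZ) Y hY) hne hdir

theorem OverC_eq_sInter :
    OverC C = ⋂₀ {Y | DirSupClosed Y ∧ Set.range (etaC C) ⊆ Y} := by
  refine subset_antisymm (Set.subset_sInter fun Y ⟨hY, hηY⟩ => ?_)
    (Set.sInter_subset_of_mem ⟨dirSupClosed_OverC, Set.range_subset_iff.2 etaC_mem_OverC⟩)
  refine Set.sInter_subset_of_mem ⟨Set.range_subset_iff.1 hηY, fun 𝒮 h𝒮 hne hdir => ?_⟩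
  exact hY h𝒮 hne hdir (isLUB_sSup 𝒮)

theorem OverC_pi_induction {Q : (Fin k → CIdl C) → Prop}
    (base : ∀ x : Fin k → P, Q fun i => etaC C (x i))
    (step : ∀ V i, DirSupClosed {Z | Q (update V i Z)})
    {V : Fin k → CIdl C} (hV : ∀ i, V i ∈ OverC C) : Q V := by
  refine pi_induction_of_mem_sInter (B := fun _ => Set.range (etaC C)) (fun W hW => ?_) step
    fun i => (OverC_eq_sInter (C := C)).subset (hV i)
  choose x hx using hW
  simpa only [hx] using base x

end CIdl

section Eval

open CIdl

variable {P : Type*} [Preorder P] {C : P → Set P → Prop} {Ω : Type*} {ar : Ω → ℕ}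
  {interp : ∀ ω, (Fin (ar ω) → P) → P} {n : ℕ}

theorem evalT_etaC (hmono : ∀ ω, Monotone (interp ω)) (hstab : ∀ ω, CoverStable C (interp ω))
    (s : OTerm Ω ar n) (v : Fin n → P) :
    evalT (fun ω => opLift C (interp ω)) (fun i => etaC C (v i)) s
      = etaC C (evalT interp v s) := by
  induction s with
  | var i => rfl
  | op ω args ih =>
    simp only [evalT, ih]
    exact opLift_etaC (hmono ω) (hstab ω) _

theorem scottContinuous_evalT (hmono : ∀ ω, Monotone (interp ω))
    (hstab : ∀ ω, CoverStable C (interp ω)) (s : OTerm Ω ar n) :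
    ScottContinuous fun V => evalT (fun ω => opLift C (interp ω)) V s := by
  induction s with
  | var i => exact scottContinuous_apply i
  | op ω args ih =>
    exact (ScottContinuous.pi ih).comp (scottContinuous_opLift (hmono ω) (hstab ω))

end Eval

theorem statement4_general {P : Type*} [Preorder P] (C : P → Set P → Prop)
    {Ω : Type*} {ar : Ω → ℕ} (interp : ∀ ω, (Fin (ar ω) → P) → P)
    (hmono : ∀ ω, Monotone (interp ω))
    (hstab : ∀ ω (x : Fin (ar ω) → P) (i : Fin (ar ω)) (U : Set P), C (x i) U →
      C (interp ω x) ((fun y => interp ω (Function.update x i y)) '' U))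
    {n : ℕ} (s t : OTerm Ω ar n) :
    (∀ ω (X : Fin (ar ω) → CIdl C), (∀ i, X i ∈ OverC C) →
      opLift C (interp ω) X ∈ OverC C) ∧
    ((∀ v : Fin n → P, evalT interp v s ≤ evalT interp v t) →
      ∀ V : Fin n → CIdl C, (∀ i, V i ∈ OverC C) →
        evalT (fun ω => opLift C (interp ω)) V s ≤
          evalT (fun ω => opLift C (interp ω)) V t) := by
  have hsc := fun u : OTerm Ω ar n => scottContinuous_evalT (C := C) hmono hstab u
  refine ⟨fun ω X hX => CIdl.OverC_pi_induction (Q := fun X => opLift C (interp ω) X ∈ OverC C)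
      (fun x => ?_) (fun V i => ?_) hX,
    fun hval V hV => CIdl.OverC_pi_induction (Q := fun V => evalT _ V s ≤ evalT _ V t)
      (fun v => ?_) (fun V i => ?_) hV⟩
  · rw [CIdl.opLift_etaC (hmono ω) (hstab ω)]
    exact CIdl.etaC_mem_OverC _
  · exact CIdl.dirSupClosed_OverC.preimage
      ((scottContinuous_update V i).comp (CIdl.scottContinuous_opLift (hmono ω) (hstab ω)))
  · rw [evalT_etaC hmono hstab, evalT_etaC hmono hstab]
    exact CIdl.etaC_mono (hval v)
  · exact dirSupClosed_setOf_le ((scottContinuous_update V i).comp (hsc s))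
      ((scottContinuous_update V i).comp (hsc t)).monotone

/-- for a dcpo presentation which is also a preordered Ω-algebra with
cover-stable operations, the free dcpo carries the lifted Ω-algebra structure and every
inequation between Ω-terms valid in `P` remains valid in `P̄`. -/
theorem statement4 {P : Type*} [Preorder P] (C : P → Set P → Prop)
    (hC : ∀ x U, C x U → U.Nonempty ∧ DirectedOn (· ≤ ·) U)
    {Ω : Type*} {ar : Ω → ℕ} (interp : ∀ ω, (Fin (ar ω) → P) → P)
    (hmono : ∀ ω, Monotone (interp ω))
    (hstab : ∀ ω (x : Fin (ar ω) → P) (i : Fin (ar ω)) (U : Set P), C (x i) U →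
      C (interp ω x) ((fun y => interp ω (Function.update x i y)) '' U))
    {n : ℕ} (s t : OTerm Ω ar n) :
    (∀ ω (X : Fin (ar ω) → CIdl C), (∀ i, X i ∈ OverC C) →
      opLift C (interp ω) X ∈ OverC C) ∧
    ((∀ v : Fin n → P, evalT interp v s ≤ evalT interp v t) →
      ∀ V : Fin n → CIdl C, (∀ i, V i ∈ OverC C) →
        evalT (fun ω => opLift C (interp ω)) V s ≤
          evalT (fun ω => opLift C (interp ω)) V t) :=
  statement4_general C interp hmono hstab s t
end

section
/- For posets P and Q, the co-directed meet completion of the product is isomorphic to the product of the co-directed meet completions: ℱ(P × Q) ≅ ℱ(P) × ℱ(Q). -/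
/-! A filter `F` on `P × Q` is the product of its two projections: if `(a, b')` and `(a', b)`
lie in `F`, a common lower bound in `F` lies below `(a, b)`, which is therefore in `F`.
Conversely a product of filters is a filter, and both assignments are monotone for inclusion. -/

namespace IsFilt

variable {α β : Type*} [Preorder α] [Preorder β]

lemma image {F : Set α} (hF : IsFilt F) {f : α → β} (hf : Monotone f)
    (hlift : ∀ x b, f x ≤ b → ∃ y, x ≤ y ∧ f y = b) : IsFilt (f '' F) := by
  obtain ⟨hne, hup, hdir⟩ := hF
  refine ⟨hne.image f, ?_, ?_⟩
  · rintro _ ⟨x, hx, rfl⟩ b hxb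
    obtain ⟨y, hxy, rfl⟩ := hlift x b hxb
    exact ⟨y, hup x hx y hxy, rfl⟩
  · rintro _ ⟨x, hx, rfl⟩ _ ⟨y, hy, rfl⟩
    obtain ⟨z, hz, hzx, hzy⟩ := hdir x hx y hy
    exact ⟨f z, ⟨z, hz, rfl⟩, hf hzx, hf hzy⟩

lemma image_fst {F : Set (α × β)} (hF : IsFilt F) : IsFilt (Prod.fst '' F) :=
  hF.image monotone_fst fun x b h => ⟨(b, x.2), ⟨h, le_rfl⟩, rfl⟩

lemma image_snd {F : Set (α × β)} (hF : IsFilt F) : IsFilt (Prod.snd '' F) :=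
  hF.image monotone_snd fun x b h => ⟨(x.1, b), ⟨le_rfl, h⟩, rfl⟩

lemma prod {F : Set α} {G : Set β} (hF : IsFilt F) (hG : IsFilt G) : IsFilt (F ×ˢ G) := by
  obtain ⟨hneF, hupF, hdirF⟩ := hF
  obtain ⟨hneG, hupG, hdirG⟩ := hG
  refine ⟨hneF.prod hneG, ?_, ?_⟩
  · rintro x ⟨hx₁, hx₂⟩ y hxy
    exact ⟨hupF _ hx₁ _ hxy.1, hupG _ hx₂ _ hxy.2⟩
  · rintro x ⟨hx₁, hx₂⟩ y ⟨hy₁, hy₂⟩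
    obtain ⟨c, hc, hcx, hcy⟩ := hdirF _ hx₁ _ hy₁
    obtain ⟨d, hd, hdx, hdy⟩ := hdirG _ hx₂ _ hy₂
    exact ⟨(c, d), ⟨hc, hd⟩, ⟨hcx, hdx⟩, ⟨hcy, hdy⟩⟩

lemma eq_image_fst_prod_image_snd {F : Set (α × β)} (hF : IsFilt F) :
    F = (Prod.fst '' F) ×ˢ (Prod.snd '' F) := by
  refine Set.subset_prod.antisymm ?_
  rintro ⟨a, b⟩ ⟨⟨x, hx, rfl⟩, ⟨y, hy, rfl⟩⟩
  obtain ⟨z, hz, hzx, hzy⟩ := hF.2.2 x hx y hy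
  exact hF.2.1 z hz _ ⟨hzx.1, hzy.2⟩

end IsFilt

namespace FComp

variable (α β : Type*) [Preorder α] [Preorder β]

def prodOrderIso : FComp (α × β) ≃o FComp α × FComp β where
  toFun F := (⟨_, F.2.image_fst⟩, ⟨_, F.2.image_snd⟩)
  invFun x := ⟨_, x.1.2.prod x.2.2⟩
  left_inv F := Subtype.ext F.2.eq_image_fst_prod_image_snd.symm
  right_inv x := Prod.ext (Subtype.ext (Set.fst_image_prod _ x.2.2.1))
    (Subtype.ext (Set.snd_image_prod x.1.2.1 _))
  map_rel_iff' {F G} := by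
    refine ⟨fun h => ?_, fun h => ⟨Set.image_mono h, Set.image_mono h⟩⟩
    change G.1 ⊆ F.1
    rw [G.2.eq_image_fst_prod_image_snd, F.2.eq_image_fst_prod_image_snd]
    exact Set.prod_mono h.1 h.2

end FComp

/-- `ℱ(P × Q) ≅ ℱ(P) × ℱ(Q)`. -/
theorem statement6 {P Q : Type*} [PartialOrder P] [PartialOrder Q] :
    Nonempty (FComp (P × Q) ≃o FComp P × FComp Q) :=
  ⟨FComp.prodOrderIso P Q⟩
end

section
/- If an ordered Ω-algebra A satisfies an inequation s ≼ t between Ω-terms with all basic operations order-preserving, then the co-directed meet completion ℱ(A), with operations extended by co-Scott continuity, also satisfies s ≼ t. -/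
/-- The lifted interpretation of the operation symbols on `ℱ(A)`. -/
def liftInterp {Ω : Type*} {ar : Ω → ℕ} {A : Type*} [PartialOrder A]
    (interp : ∀ ω, (Fin (ar ω) → A) → A) (hm : ∀ ω, Monotone (interp ω)) :
    ∀ ω : Ω, (Fin (ar ω) → FComp A) → FComp A :=
  fun ω => liftF (A := fun _ : Fin (ar ω) => A) (interp ω) (hm ω)

/- The term functions of `ℱ(A)` are the liftings of the term functions of `A`: a composite of
liftings is the lifting of the composite because finitely many elements of a filter have a lower
bound in it. Lifting is monotone in the lifted map, so `s ≼ t` transfers. -/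

lemma IsFilt.exists_forall_le {A ι : Type*} [Preorder A] [Finite ι] {F : Set A}
    (hF : IsFilt F) (g : ι → A) (hg : ∀ j, g j ∈ F) : ∃ c ∈ F, ∀ j, c ≤ g j := by
  have : Nonempty F := hF.1.to_subtype
  obtain ⟨⟨c, hc⟩, hle⟩ :=
    (DirectedOn.directed_val (r := (· ≥ ·)) hF.2.2).finite_le fun j => (⟨g j, hg j⟩ : F)
  exact ⟨c, hc, hle⟩

section liftF

variable {ι : Type*} {A : ι → Type*} {B : Type*} [∀ i, Preorder (A i)] [Preorder B]

lemma liftF_mono {f g : (∀ i, A i) → B} (hf : Monotone f) (hg : Monotone g)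
    (hfg : ∀ a, f a ≤ g a) (x : ∀ i, FComp (A i)) : liftF f hf x ≤ liftF g hg x :=
  fun _ ⟨a, ha, hab⟩ => ⟨a, ha, (hfg a).trans hab⟩

lemma liftF_eval (i : ι) (x : ∀ i, FComp (A i)) :
    liftF (fun a => a i) (fun _ _ hab => hab i) x = x i := by
  classical
  refine Subtype.ext (Set.ext fun b => ?_)
  constructor
  · rintro ⟨a, ha, hab⟩
    exact (x i).2.2.1 (a i) (ha i) b hab
  · intro hb
    refine ⟨Function.update (fun j => (x j).2.1.some) i b, fun j => ?_, by simp⟩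
    rcases eq_or_ne j i with rfl | hji
    · simpa using hb
    · simpa [hji] using (x j).2.1.some_mem

lemma liftF_comp {κ : Type*} [Finite κ] {C : κ → Type*} [∀ k, Preorder (C k)]
    (f : (∀ k, C k) → B) (hf : Monotone f) (g : ∀ k, (∀ i, A i) → C k)
    (hg : ∀ k, Monotone (g k)) (x : ∀ i, FComp (A i)) :
    liftF f hf (fun k => liftF (g k) (hg k) x) =
      liftF (fun a => f fun k => g k a) (fun _ _ hab => hf fun k => hg k hab) x := by
  refine Subtype.ext (Set.ext fun b => ?_)
  constructor
  · rintro ⟨c, hc, hcb⟩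
    choose a ha hac using hc
    choose e he hea using fun i => (x i).2.exists_forall_le (fun k => a k i) fun k => ha k i
    exact ⟨e, he, (hf fun k => (hg k fun i => hea i k).trans (hac k)).trans hcb⟩
  · rintro ⟨a, ha, hab⟩
    exact ⟨fun k => g k a, fun k => ⟨a, ha, le_rfl⟩, hab⟩

end liftF

section Terms

variable {Ω : Type*} {ar : Ω → ℕ} {n : ℕ} {A : Type*}

lemma evalT_monotone [Preorder A] (interp : ∀ ω, (Fin (ar ω) → A) → A)
    (hm : ∀ ω, Monotone (interp ω)) (u : OTerm Ω ar n) :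
    Monotone fun v : Fin n → A => evalT interp v u := by
  intro v w hvw
  induction u with
  | var i => exact hvw i
  | op ω args ih => exact hm ω fun j => ih j

lemma evalT_liftInterp [PartialOrder A] (interp : ∀ ω, (Fin (ar ω) → A) → A)
    (hm : ∀ ω, Monotone (interp ω)) (V : Fin n → FComp A) (u : OTerm Ω ar n) :
    evalT (liftInterp interp hm) V u =
      liftF (A := fun _ : Fin n => A) (fun v => evalT interp v u)
        (evalT_monotone interp hm u) V := by
  induction u with
  | var i => exact (liftF_eval i V).symm
  | op ω args ih =>
    simp only [evalT, ih]
    exact liftF_comp (interp ω) (hm ω) _ _ V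

end Terms

/-- inequations between Ω-terms valid in an ordered Ω-algebra with monotone
operations remain valid in its co-directed meet completion with the co-Scott continuously
extended operations. -/
theorem statement7 {Ω : Type*} {ar : Ω → ℕ} {A : Type*} [PartialOrder A]
    (interp : ∀ ω, (Fin (ar ω) → A) → A) (hm : ∀ ω, Monotone (interp ω))
    {n : ℕ} (s t : OTerm Ω ar n)
    (h : ∀ v : Fin n → A, evalT interp v s ≤ evalT interp v t) :
    ∀ V : Fin n → FComp A,
      evalT (liftInterp interp hm) V s ≤ evalT (liftInterp interp hm) V t := by
  intro V
  rw [evalT_liftInterp, evalT_liftInterp]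
  exact liftF_mono _ _ h V
end

section
/- If A is a bounded lattice, then its co-directed meet completion ℱ(A), equipped with the co-Scott continuous extensions of meet and join and the images of 0 and 1, is a complete lattice, and the embedding ↑_A : A → ℱ(A) is a bounded lattice embedding. -/
section Lift

variable {ι : Type*} {A : ι → Type*} {B : Type*} [∀ i, Preorder (A i)] [Preorder B]

theorem liftF_pf (f : (∀ i, A i) → B) (hf : Monotone f) (a : ∀ i, A i) :
    liftF f hf (fun i => pf (a i)) = pf (f a) :=
  Subtype.ext <| Set.ext fun _ =>
    ⟨fun ⟨_, ha', hb⟩ => (hf ha').trans hb, fun hb => ⟨a, fun _ => le_rfl, hb⟩⟩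

end Lift

section Preorder

variable {A : Type*} [Preorder A]

theorem pf_le_pf_iff {a b : A} : pf a ≤ pf b ↔ a ≤ b :=
  ⟨fun h => h le_rfl, fun h _ hc => h.trans hc⟩

theorem isTop_pf_top [OrderTop A] : IsTop (pf (⊤ : A)) := fun x b hb =>
  let ⟨c, hc⟩ := x.2.1
  x.2.2.1 c hc b (le_top.trans hb)

theorem isBot_pf_bot [OrderBot A] : IsBot (pf (⊥ : A)) := fun _ _ _ => bot_le

end Preorder

section Lattice

variable {A : Type*} [Lattice A]

theorem mem_supF {x y : FComp A} {b : A} :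
    b ∈ (supF x y).1 ↔ ∃ a ∈ x.1, ∃ c ∈ y.1, a ⊔ c ≤ b :=
  ⟨fun ⟨a, ha, hab⟩ => ⟨a 0, ha 0, a 1, ha 1, hab⟩,
    fun ⟨a, ha, c, hc, h⟩ => ⟨![a, c], Fin.forall_fin_two.mpr ⟨ha, hc⟩, h⟩⟩

theorem mem_infF {x y : FComp A} {b : A} :
    b ∈ (infF x y).1 ↔ ∃ a ∈ x.1, ∃ c ∈ y.1, a ⊓ c ≤ b :=
  ⟨fun ⟨a, ha, hab⟩ => ⟨a 0, ha 0, a 1, ha 1, hab⟩,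
    fun ⟨a, ha, c, hc, h⟩ => ⟨![a, c], Fin.forall_fin_two.mpr ⟨ha, hc⟩, h⟩⟩

theorem isLUB_supF (x y : FComp A) : IsLUB {x, y} (supF x y) := by
  refine ⟨?_, fun z hz b hb => ?_⟩
  · rintro z (rfl | rfl) b hb <;> obtain ⟨a, ha, c, hc, h⟩ := mem_supF.mp hb
    · exact z.2.2.1 a ha b (le_sup_left.trans h)
    · exact z.2.2.1 c hc b (le_sup_right.trans h)
  · exact mem_supF.mpr ⟨b, hz (.inl rfl) hb, b, hz (.inr rfl) hb, (sup_idem b).le⟩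

theorem isGLB_infF (x y : FComp A) : IsGLB {x, y} (infF x y) := by
  refine ⟨?_, fun z hz b hb => ?_⟩
  · rintro z (rfl | rfl) a ha
    · obtain ⟨c, hc⟩ := y.2.1
      exact mem_infF.mpr ⟨a, ha, c, hc, inf_le_left⟩
    · obtain ⟨c, hc⟩ := x.2.1
      exact mem_infF.mpr ⟨c, hc, a, ha, inf_le_right⟩
  · obtain ⟨a, ha, c, hc, h⟩ := mem_infF.mp hb
    obtain ⟨d, hd, hda, hdc⟩ := z.2.2.2 a (hz (.inl rfl) ha) c (hz (.inr rfl) hc)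
    exact z.2.2.1 d hd b ((le_inf hda hdc).trans h)

theorem pf_sup (a b : A) : pf (a ⊔ b) = supF (pf a) (pf b) := by
  have hpf : ![pf a, pf b] = fun i => pf (![a, b] i) :=
    funext (Fin.forall_fin_two.mpr ⟨rfl, rfl⟩)
  rw [supF, hpf]
  exact (liftF_pf (A := fun _ : Fin 2 => A) (fun c => c 0 ⊔ c 1) _ ![a, b]).symm

theorem pf_inf (a b : A) : pf (a ⊓ b) = infF (pf a) (pf b) := by
  have hpf : ![pf a, pf b] = fun i => pf (![a, b] i) :=
    funext (Fin.forall_fin_two.mpr ⟨rfl, rfl⟩)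
  rw [infF, hpf]
  exact (liftF_pf (A := fun _ : Fin 2 => A) (fun c => c 0 ⊓ c 1) _ ![a, b]).symm

end Lattice

/-- for a bounded lattice `A`, the completion `ℱ(A)` with the extended meet and
join is a complete lattice, and `↑ : A → ℱ(A)` is a bounded lattice embedding. -/
theorem statement8 {A : Type*} [Lattice A] [BoundedOrder A] :
    (∀ S : Set (FComp A), (∃ x, IsLUB S x) ∧ ∃ x, IsGLB S x) ∧
    (∀ x y : FComp A, IsLUB {x, y} (supF x y)) ∧
    (∀ x y : FComp A, IsGLB {x, y} (infF x y)) ∧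
    (∀ a b : A, pf a ≤ pf b ↔ a ≤ b) ∧
    (∀ a b : A, pf (a ⊔ b) = supF (pf a) (pf b)) ∧
    (∀ a b : A, pf (a ⊓ b) = infF (pf a) (pf b)) ∧
    IsTop (pf (⊤ : A)) ∧ IsBot (pf (⊥ : A)) :=
  ⟨fun S => ⟨⟨sSup S, isLUB_sSup S⟩, sInf S, isGLB_sInf S⟩, isLUB_supF, isGLB_infF,
    fun _ _ => pf_le_pf_iff, pf_sup, pf_inf, isTop_pf_top, isBot_pf_bot⟩
end

section
/- If f : A₁ × ⋯ × Aₙ → B is an operator between bounded lattices (preserves binary joins in each coordinate), then its co-Scott continuous extension f^ℱ : ℱ(A₁) × ⋯ × ℱ(Aₙ) → ℱ(B) is also an operator. -/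
/-! Membership in `f^ℱ(x)` is witnessed by a tuple from the filters `x j`. A witness `u ⊔ v`
in coordinate `i` of `f^ℱ(…, xᵢ ∨ y, …)` splits, by the operator property, into witnesses for
`f^ℱ(x)` and `f^ℱ(x[i := y])`. Conversely, two such witnesses are first pushed to a common lower
bound outside coordinate `i` (the filters are down-directed), and then glued in coordinate `i`
by the operator property again. -/

section OperatorExtension

variable {ι : Type*} {A : ι → Type*} {B : Type*}

lemma mem_supF_iff {α : Type*} [Lattice α] {x y : FComp α} {b : α} :
    b ∈ (supF x y).1 ↔ ∃ u ∈ x.1, ∃ v ∈ y.1, u ⊔ v ≤ b := by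
  constructor
  · rintro ⟨a, ha, hab⟩
    exact ⟨a 0, ha 0, a 1, ha 1, hab⟩
  · rintro ⟨u, hu, v, hv, huv⟩
    exact ⟨![u, v], fun k => by fin_cases k <;> assumption, huv⟩

lemma exists_le_le_of_mem_filters [∀ i, Preorder (A i)] {x : ∀ i, FComp (A i)} {a b : ∀ i, A i}
    (ha : ∀ i, a i ∈ (x i).1) (hb : ∀ i, b i ∈ (x i).1) :
    ∃ c : ∀ i, A i, (∀ i, c i ∈ (x i).1) ∧ c ≤ a ∧ c ≤ b := by
  choose c hc hca hcb using fun i => (x i).2.2.2 (a i) (ha i) (b i) (hb i)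
  exact ⟨c, hc, hca, hcb⟩

variable [DecidableEq ι]

lemma IsOperator.map_update_sup [∀ i, Lattice (A i)] [Lattice B] {f : (∀ i, A i) → B}
    (hop : IsOperator f) (a : ∀ i, A i) (i : ι) (u v : A i) :
    f (Function.update a i (u ⊔ v)) = f (Function.update a i u) ⊔ f (Function.update a i v) := by
  simpa only [Function.update_self, Function.update_idem] using hop (Function.update a i u) i v

section Preorder

variable [∀ i, Preorder (A i)]

lemma update_mem_update_filters {x : ∀ i, FComp (A i)} {a : ∀ i, A i} {i : ι}
    (ha : ∀ j ≠ i, a j ∈ (x j).1) {F : FComp (A i)} {u : A i} (hu : u ∈ F.1) :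
    ∀ j, Function.update a i u j ∈ (Function.update x i F j).1 := by
  intro j
  rcases eq_or_ne j i with rfl | hj
  · simpa using hu
  · simpa [hj] using ha j hj

lemma mem_filters_of_mem_update_filters {x : ∀ i, FComp (A i)} {a : ∀ i, A i} {i : ι}
    {F : FComp (A i)} (ha : ∀ j, a j ∈ (Function.update x i F j).1) :
    ∀ j ≠ i, a j ∈ (x j).1 := by
  intro j hj
  simpa [hj] using ha j

end Preorder

variable [∀ i, Lattice (A i)] [Lattice B] {f : (∀ i, A i) → B}

lemma liftF_update_supF_subset (hf : Monotone f) (hop : IsOperator f)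
    (x : ∀ i, FComp (A i)) (i : ι) (y : FComp (A i)) :
    (liftF f hf (Function.update x i (supF (x i) y))).1 ⊆
      (supF (liftF f hf x) (liftF f hf (Function.update x i y))).1 := by
  rintro b ⟨a, ha, hab⟩
  obtain ⟨u, hu, v, hv, huv⟩ := mem_supF_iff.mp (by simpa using ha i)
  have ha' := mem_filters_of_mem_update_filters ha
  have hux : ∀ j, Function.update a i u j ∈ (x j).1 := by
    simpa using update_mem_update_filters ha' hu
  refine mem_supF_iff.mpr ⟨_, ⟨_, hux, le_rfl⟩, _, ⟨_, update_mem_update_filters ha' hv, le_rfl⟩, ?_⟩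
  calc f (Function.update a i u) ⊔ f (Function.update a i v)
      = f (Function.update a i (u ⊔ v)) := (hop.map_update_sup a i u v).symm
    _ ≤ f a := hf <| update_le_iff.mpr ⟨huv, fun _ _ => le_rfl⟩
    _ ≤ b := hab

lemma supF_liftF_subset_liftF_update_supF (hf : Monotone f) (hop : IsOperator f)
    (x : ∀ i, FComp (A i)) (i : ι) (y : FComp (A i)) :
    (supF (liftF f hf x) (liftF f hf (Function.update x i y))).1 ⊆
      (liftF f hf (Function.update x i (supF (x i) y))).1 := by
  intro b hb
  obtain ⟨w, ⟨a, ha, haw⟩, w', ⟨a', ha', haw'⟩, hww'⟩ := mem_supF_iff.mp hb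
  have ha'x : ∀ j, Function.update a' i (a i) j ∈ (x j).1 := by
    simpa using update_mem_update_filters (mem_filters_of_mem_update_filters ha') (ha i)
  obtain ⟨c, hc, hca, hca'⟩ := exists_le_le_of_mem_filters ha ha'x
  have hc' : Function.update c i (a' i) ≤ a' :=
    update_le_iff.mpr ⟨le_rfl, fun j hj => by simpa [hj] using hca' j⟩
  refine ⟨Function.update c i (c i ⊔ a' i),
    update_mem_update_filters (fun j _ => hc j)
      (mem_supF_iff.mpr ⟨c i, hc i, a' i, by simpa using ha' i, le_rfl⟩), ?_⟩
  calc f (Function.update c i (c i ⊔ a' i))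
      = f (Function.update c i (c i)) ⊔ f (Function.update c i (a' i)) := hop.map_update_sup ..
    _ ≤ w ⊔ w' := sup_le_sup ((hf (by simpa using hca)).trans haw) ((hf hc').trans haw')
    _ ≤ b := hww'

end OperatorExtension

theorem statement9_general {n : ℕ} {A : Fin n → Type*} {B : Type*}
    [∀ i, Lattice (A i)] [Lattice B]
    (f : (∀ i, A i) → B) (hf : Monotone f) (hop : IsOperator f) :
    ∀ (x : ∀ i, FComp (A i)) (i : Fin n) (y : FComp (A i)),
      liftF f hf (Function.update x i (supF (x i) y)) =
        supF (liftF f hf x) (liftF f hf (Function.update x i y)) := fun x i y =>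
  Subtype.ext <| subset_antisymm (liftF_update_supF_subset hf hop x i y)
    (supF_liftF_subset_liftF_update_supF hf hop x i y)

/-- the extension `f^ℱ` of an operator between bounded lattices is again an
operator (preserves the extended binary joins in each coordinate). -/
theorem statement9 {n : ℕ} {A : Fin n → Type*} {B : Type*}
    [∀ i, Lattice (A i)] [∀ i, BoundedOrder (A i)] [Lattice B] [BoundedOrder B]
    (f : (∀ i, A i) → B) (hf : Monotone f) (hop : IsOperator f) :
    ∀ (x : ∀ i, FComp (A i)) (i : Fin n) (y : FComp (A i)),
      liftF f hf (Function.update x i (supF (x i) y)) =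
        supF (liftF f hf x) (liftF f hf (Function.update x i y)) :=
  statement9_general f hf hop
end

section
/- Every lattice A has a canonical extension e : A → Aᵟ (a lattice completion that is dense and compact), and it is unique up to isomorphism of completions. -/
universe u

/-! The canonical extension is the concept lattice of the polarity between the filters and the
ideals of `A` in which a filter `F` is related to an ideal `I` when they meet; `a ∈ A` becomes the
concept ({F | a ∈ F}, {I | a ∈ I}). There `⋀ e[F]` and `⋁ e[I]` are the concepts generated by
`F` and by `I`, so compactness is the relation itself, and density holds because a concept is
determined by its extent as well as by its intent.

Conversely, in any canonical extension `e : A → C`, compactness turns `⋀ e[F] ≤ ⋁ e[I]` into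
"`F` meets `I`", and density makes `u ↦ ({F | ⋀ e[F] ≤ u}, {I | u ≤ ⋁ e[I]})` an order
isomorphism onto that concept lattice; two canonical extensions are thus isomorphic through it. -/

section FiltersAndIdeals

theorem isFilt_Ici {P : Type*} [Preorder P] (a : P) : IsFilt (Set.Ici a) :=
  ⟨⟨a, le_rfl⟩, fun _ hx _ hb => le_trans hx hb, fun _ _ _ _ => ⟨a, le_rfl, ‹_›, ‹_›⟩⟩

theorem isIdl_Iic {P : Type*} [Preorder P] (a : P) : IsIdl (Set.Iic a) :=
  ⟨⟨a, le_rfl⟩, fun _ hx _ hb => le_trans hb hx, fun _ _ _ _ => ⟨a, le_rfl, ‹_›, ‹_›⟩⟩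

variable {A : Type*} [Lattice A] {F I : Set A}

theorem IsFilt.inf_mem_iff (hF : IsFilt F) {a b : A} : a ⊓ b ∈ F ↔ a ∈ F ∧ b ∈ F := by
  refine ⟨fun h => ⟨hF.2.1 _ h a inf_le_left, hF.2.1 _ h b inf_le_right⟩, fun ⟨ha, hb⟩ => ?_⟩
  obtain ⟨c, hc, hca, hcb⟩ := hF.2.2 a ha b hb
  exact hF.2.1 c hc _ (le_inf hca hcb)

theorem IsIdl.sup_mem_iff (hI : IsIdl I) {a b : A} : a ⊔ b ∈ I ↔ a ∈ I ∧ b ∈ I := by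
  refine ⟨fun h => ⟨hI.2.1 _ h a le_sup_left, hI.2.1 _ h b le_sup_right⟩, fun ⟨ha, hb⟩ => ?_⟩
  obtain ⟨c, hc, hac, hbc⟩ := hI.2.2 a ha b hb
  exact hI.2.1 c hc _ (sup_le hac hbc)

theorem IsFilt.inter_Iic_nonempty_iff (hF : IsFilt F) {a : A} :
    (F ∩ Set.Iic a).Nonempty ↔ a ∈ F :=
  ⟨fun ⟨_, hc, hca⟩ => hF.2.1 _ hc a hca, fun ha => ⟨a, ha, le_rfl⟩⟩

theorem IsIdl.Ici_inter_nonempty_iff (hI : IsIdl I) {a : A} :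
    (Set.Ici a ∩ I).Nonempty ↔ a ∈ I :=
  ⟨fun ⟨_, hac, hc⟩ => hI.2.1 _ hc a hac, fun ha => ⟨a, le_rfl, ha⟩⟩

end FiltersAndIdeals

namespace CanonicalExtension

variable (A : Type*) [Lattice A]

abbrev Filters : Type _ := {F : Set A // IsFilt F}

abbrev Ideals : Type _ := {I : Set A // IsIdl I}

variable {A}

def Meets (F : Filters A) (I : Ideals A) : Prop := (F.1 ∩ I.1).Nonempty

end CanonicalExtension

open CanonicalExtension in
abbrev CanonicalExtension (A : Type*) [Lattice A] : Type _ :=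
  Concept (Filters A) (Ideals A) Meets

namespace CanonicalExtension

variable {A : Type*} [Lattice A]

def embed (a : A) : CanonicalExtension A where
  extent := {F | a ∈ F.1}
  intent := {I | a ∈ I.1}
  upperPolar_extent := by
    ext I
    exact ⟨fun hI => I.2.Ici_inter_nonempty_iff.mp (hI (a := ⟨_, isFilt_Ici a⟩) le_rfl),
      fun ha F hF => ⟨a, hF, ha⟩⟩
  lowerPolar_intent := by
    ext F
    exact ⟨fun hF => F.2.inter_Iic_nonempty_iff.mp (hF (b := ⟨_, isIdl_Iic a⟩) le_rfl),
      fun ha I hI => ⟨a, ha, hI⟩⟩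

theorem sInf_image_embed {F : Set A} (hF : IsFilt F) :
    sInf (embed '' F) = Concept.ofObject Meets ⟨F, hF⟩ := by
  ext G
  simp only [Concept.extent_sInf, Set.mem_iInter, Set.forall_mem_image, Concept.ofObjects,
    Concept.extent_ofIsIntent, mem_lowerPolar_iff, mem_upperPolar_iff, Set.mem_singleton_iff,
    forall_eq]
  refine ⟨fun hG I ⟨c, hcF, hcI⟩ => ⟨c, hG hcF, hcI⟩, fun hG a ha => ?_⟩
  exact G.2.inter_Iic_nonempty_iff.mp (hG (b := ⟨_, isIdl_Iic a⟩) ⟨a, ha, le_rfl⟩)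

theorem sSup_image_embed {I : Set A} (hI : IsIdl I) :
    sSup (embed '' I) = Concept.ofAttribute Meets ⟨I, hI⟩ := by
  refine Concept.ext' (Set.ext fun J => ?_)
  simp only [Concept.intent_sSup, Set.mem_iInter, Set.forall_mem_image, Concept.ofAttributes,
    Concept.intent_ofIsExtent, mem_lowerPolar_iff, mem_upperPolar_iff, Set.mem_singleton_iff,
    forall_eq]
  refine ⟨fun hJ F ⟨c, hcF, hcI⟩ => ⟨c, hcF, hJ hcI⟩, fun hJ a ha => ?_⟩
  exact J.2.Ici_inter_nonempty_iff.mp (hJ (a := ⟨_, isFilt_Ici a⟩) ⟨a, le_rfl, ha⟩)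

theorem embed_le_embed_iff {a b : A} : embed a ≤ embed b ↔ a ≤ b :=
  ⟨fun h => Concept.extent_subset_extent_iff.mpr h
    (show (⟨Set.Ici a, isFilt_Ici a⟩ : Filters A) ∈ (embed a).extent from le_rfl),
    fun hab F ha => F.2.2.1 a ha b hab⟩

theorem embed_sup (a b : A) : embed (a ⊔ b) = embed a ⊔ embed b :=
  Concept.ext' (Set.ext fun I => I.2.sup_mem_iff)

theorem embed_inf (a b : A) : embed (a ⊓ b) = embed a ⊓ embed b :=
  Concept.ext (Set.ext fun F => F.2.inf_mem_iff)

theorem isCanExt_embed : IsCanExt (embed : A → CanonicalExtension A) := by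
  refine ⟨fun _ _ => embed_le_embed_iff, embed_sup, embed_inf, fun u v huv => ?_,
    fun F I hF hI hFI => ?_⟩
  · obtain ⟨F, hFu, hFv⟩ := Set.not_subset.mp huv
    obtain ⟨I, hIv, hFI⟩ : ∃ I ∈ v.intent, ¬ Meets F I := by
      rw [← v.lowerPolar_intent] at hFv
      simpa only [mem_lowerPolar_iff, not_forall, exists_prop] using hFv
    refine ⟨F.1, I.1, F.2, I.2, ?_⟩
    simp only [sInf_image_embed F.2, sSup_image_embed I.2, Concept.ofObjects_le_iff,
      Concept.le_ofAttributes_iff, Set.singleton_subset_iff]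
    exact ⟨hFu, hFv, hIv, fun hIu => hFI (u.rel_extent_intent hFu hIu)⟩
  · rw [sInf_image_embed hF, sSup_image_embed hI, Concept.ofObject_le_ofAttribute_iff] at hFI
    obtain ⟨c, hcF, hcI⟩ := hFI
    exact ⟨c, hcF, c, hcI, le_rfl⟩

end CanonicalExtension

section Uniqueness

open CanonicalExtension

variable {A C : Type*} [Lattice A] [CompleteLattice C] {e : A → C}

theorem IsCanExt.sInf_image_le_sSup_image_iff (h : IsCanExt e) {F I : Set A} (hF : IsFilt F)
    (hI : IsIdl I) : sInf (e '' F) ≤ sSup (e '' I) ↔ (F ∩ I).Nonempty := by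
  constructor
  · intro hle
    obtain ⟨b, hb, a, ha, hba⟩ := h.2.2.2.2 F I hF hI hle
    exact ⟨a, hF.2.1 b hb a hba, ha⟩
  · rintro ⟨c, hcF, hcI⟩
    exact (sInf_le (Set.mem_image_of_mem e hcF)).trans (le_sSup (Set.mem_image_of_mem e hcI))

theorem IsCanExt.le_of_forall_sInf_image_le (h : IsCanExt e) {u v : C}
    (huv : ∀ F, IsFilt F → sInf (e '' F) ≤ u → sInf (e '' F) ≤ v) : u ≤ v := by
  by_contra huv'
  obtain ⟨F, -, hF, -, hFu, hFv, -⟩ := h.2.2.2.1 u v huv'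
  exact hFv (huv F hF hFu)

theorem IsCanExt.le_of_forall_le_sSup_image (h : IsCanExt e) {u v : C}
    (huv : ∀ I, IsIdl I → v ≤ sSup (e '' I) → u ≤ sSup (e '' I)) : u ≤ v := by
  by_contra huv'
  obtain ⟨-, I, -, hI, -, -, hIv, hIu⟩ := h.2.2.2.1 u v huv'
  exact hIu (huv I hI hIv)

theorem IsCanExt.sInf_image_Ici (h : IsCanExt e) (a : A) : sInf (e '' Set.Ici a) = e a :=
  IsGLB.sInf_eq <| IsLeast.isGLB
    ⟨⟨a, le_rfl, rfl⟩, fun _ ⟨_, hab, hb⟩ => hb ▸ (h.1 _ _).mpr hab⟩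

def IsCanExt.toCanonicalExtension (h : IsCanExt e) (u : C) : CanonicalExtension A where
  extent := {F | sInf (e '' F.1) ≤ u}
  intent := {I | u ≤ sSup (e '' I.1)}
  upperPolar_extent := Set.ext fun I => by
    simp only [mem_upperPolar_iff, Set.mem_ofPred_eq, Meets]
    refine ⟨fun hI => h.le_of_forall_sInf_image_le fun F hF hFu => ?_, fun hu F hFu => ?_⟩
    · exact (h.sInf_image_le_sSup_image_iff hF I.2).mpr (hI (a := ⟨F, hF⟩) hFu)
    · exact (h.sInf_image_le_sSup_image_iff F.2 I.2).mp (hFu.trans hu)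
  lowerPolar_intent := Set.ext fun F => by
    simp only [mem_lowerPolar_iff, Set.mem_ofPred_eq, Meets]
    refine ⟨fun hF => h.le_of_forall_le_sSup_image fun I hI hIu => ?_, fun hu I hIu => ?_⟩
    · exact (h.sInf_image_le_sSup_image_iff F.2 hI).mpr (hF (b := ⟨I, hI⟩) hIu)
    · exact (h.sInf_image_le_sSup_image_iff F.2 I.2).mp (hu.trans hIu)

theorem IsCanExt.toCanonicalExtension_le_iff (h : IsCanExt e) {u v : C} :
    h.toCanonicalExtension u ≤ h.toCanonicalExtension v ↔ u ≤ v := by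
  rw [← Concept.extent_subset_extent_iff]
  exact ⟨fun huv => h.le_of_forall_sInf_image_le fun F hF hFu => huv (a := ⟨F, hF⟩) hFu,
    fun huv _ hFu => le_trans hFu huv⟩

theorem IsCanExt.toCanonicalExtension_surjective (h : IsCanExt e) :
    Function.Surjective h.toCanonicalExtension := fun c => by
  refine ⟨⨆ F ∈ c.extent, sInf (e '' F.1), Concept.ext' (Set.ext fun I => ?_)⟩
  rw [← c.upperPolar_extent]
  simp only [IsCanExt.toCanonicalExtension, Set.mem_ofPred_eq, iSup₂_le_iff, mem_upperPolar_iff,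
    Meets]
  exact forall₂_congr fun F _ => h.sInf_image_le_sSup_image_iff F.2 I.2

theorem IsCanExt.toCanonicalExtension_apply (h : IsCanExt e) (a : A) :
    h.toCanonicalExtension (e a) = embed a :=
  Concept.ext' (Set.ext fun I => by
    change e a ≤ sSup (e '' I.1) ↔ a ∈ I.1
    rw [← h.sInf_image_Ici, h.sInf_image_le_sSup_image_iff (isFilt_Ici a) I.2,
      I.2.Ici_inter_nonempty_iff])

noncomputable def IsCanExt.orderIso (h : IsCanExt e) : C ≃o CanonicalExtension A :=
  OrderIso.ofSurjective (OrderEmbedding.ofMapLEIff _ fun _ _ => h.toCanonicalExtension_le_iff)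
    h.toCanonicalExtension_surjective

theorem IsCanExt.orderIso_apply (h : IsCanExt e) (a : A) : h.orderIso (e a) = embed a :=
  h.toCanonicalExtension_apply a

end Uniqueness

theorem statement10_general (A : Type u) [Lattice A] :
    (∃ (C : Type u) (_ : CompleteLattice C) (e : A → C), IsCanExt e) ∧
    ∀ (C₁ C₂ : Type u) [CompleteLattice C₁] [CompleteLattice C₂]
      (e₁ : A → C₁) (e₂ : A → C₂), IsCanExt e₁ → IsCanExt e₂ →
      ∃ φ : C₁ ≃o C₂, ∀ a, φ (e₁ a) = e₂ a := by
  refine ⟨⟨CanonicalExtension A, inferInstance, CanonicalExtension.embed,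
    CanonicalExtension.isCanExt_embed⟩, fun C₁ C₂ _ _ e₁ e₂ h₁ h₂ => ?_⟩
  refine ⟨h₁.orderIso.trans h₂.orderIso.symm, fun a => ?_⟩
  rw [OrderIso.trans_apply, h₁.orderIso_apply, OrderIso.symm_apply_eq, h₂.orderIso_apply]

/-- every (bounded) lattice has a canonical extension (a dense and compact
lattice completion), unique up to isomorphism of completions. -/
theorem statement10 (A : Type u) [Lattice A] [BoundedOrder A] :
    (∃ (C : Type u) (_ : CompleteLattice C) (e : A → C), IsCanExt e) ∧
    ∀ (C₁ C₂ : Type u) [CompleteLattice C₁] [CompleteLattice C₂]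
      (e₁ : A → C₁) (e₂ : A → C₂), IsCanExt e₁ → IsCanExt e₂ →
      ∃ φ : C₁ ≃o C₂, ∀ a, φ (e₁ a) = e₂ a :=
  statement10_general A
end

section
/- For a lattice A, the covering relation C_A on ℱ(A) given by Definition Δ(A) satisfies the join-stability property: for all y ∈ ℱ(A) and all x ◁ U, one has x ∨ y ◁ (U ∨ y), where U ∨ y = {x' ∨ y | x' ∈ U}. -/
section JoinStability
variable {A : Type*}

theorem pf_monotone [Preorder A] : Monotone (pf : A → FComp A) :=
  fun _ _ hab _ hb => le_trans hab hb

theorem IsIdl.exists_sup_le {β : Type*} [Preorder A] [SemilatticeSup β] {e : A → β}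
    (he : Monotone e) {I : Set A} (hI : IsIdl I) {a b : A} (ha : a ∈ I) (hb : b ∈ I)
    {u v : β} (hu : u ≤ e a) (hv : v ≤ e b) : ∃ c ∈ I, u ⊔ v ≤ e c := by
  obtain ⟨c, hc, hac, hbc⟩ := hI.2.2 a ha b hb
  exact ⟨c, hc, sup_le (hu.trans (he hac)) (hv.trans (he hbc))⟩

end JoinStability

/-- the covering relation `C_A` of `Δ(A)` is join-stable:
if `x ◁ U` then `x ∨ y ◁ U ∨ y`. -/
theorem statement11 {A : Type*} [Lattice A] [BoundedOrder A]
    (y x : FComp A) (U : Set (FComp A)) (h : covD x U) :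
    covD (x ⊔ y) ((fun x' => x' ⊔ y) '' U) := by
  obtain ⟨hne, hdir, hcov⟩ := h
  refine ⟨hne.image _, hdir.mono_comp fun _ _ h => sup_le_sup_right h y, fun I hI hbound => ?_⟩
  have hboundU : ∀ x' ∈ U, ∃ a' ∈ I, x' ≤ pf a' := fun x' hx' =>
    (hbound _ ⟨x', hx', rfl⟩).imp fun _ ⟨ha, hle⟩ => ⟨ha, le_sup_left.trans hle⟩
  obtain ⟨a, ha, hxa⟩ := hcov I hI hboundU
  -- `U` is nonempty, so `y ≤ u ⊔ y` is itself bounded by some `↑b` with `b ∈ I`.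
  obtain ⟨u, hu⟩ := hne
  obtain ⟨b, hb, hub⟩ := hbound (u ⊔ y) ⟨u, hu, rfl⟩
  exact hI.exists_sup_le pf_monotone ha hb hxa (le_sup_right.trans hub)
end

section
/- For every x in ℱ(A), the C_A-ideal generated by x equals the principal downset of x: ⟨x⟩ = ↓x; consequently η : ℱ(A) → Δ(A)-bar, x ↦ ⟨x⟩, is an order-embedding. -/
/-!
Every principal downset `↓x` of `ℱ(A)` is already a `C_A`-ideal: if `y ◁ U ⊆ ↓x` and `b ∈ x`,
then every member of `U` lies below `↑b`, so testing the cover against the principal ideal `↓b`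
yields `a ≤ b` with `y ≤ ↑a`, whence `b ∈ y`. Hence `⟨x⟩ = ↓x`, and `η` is an order-embedding
because `↓y ⊆ ↓z ↔ y ≤ z`.
-/

section Presentation
variable {P : Type*} [Preorder P] {C : P → Set P → Prop}

theorem genC_singleton_eq_Iic {x : P} (hx : IsCIdeal C (Set.Iic x)) :
    genC C {x} = Set.Iic x :=
  subset_antisymm (Set.sInter_subset_of_mem ⟨hx, Set.singleton_subset_iff.2 le_rfl⟩)
    fun _ hy => (isCIdeal_genC C {x}).1 x (subset_genC C {x} rfl) _ hy

theorem etaC_le_etaC_iff (hC : ∀ x : P, IsCIdeal C (Set.Iic x)) {y z : P} :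
    etaC C y ≤ etaC C z ↔ y ≤ z := by
  change genC C {y} ⊆ genC C {z} ↔ _
  rw [genC_singleton_eq_Iic (hC y), genC_singleton_eq_Iic (hC z)]
  exact Set.Iic_subset_Iic

end Presentation

section FilterCompletion
variable {A : Type*} [Preorder A]

theorem isIdl_Iic_s13 (b : A) : IsIdl (Set.Iic b) :=
  ⟨⟨b, le_rfl⟩, fun _ ha _ hca => hca.trans ha, fun _ ha _ hc => ⟨b, le_rfl, ha, hc⟩⟩

theorem le_pf_iff {x : FComp A} {a : A} : x ≤ pf a ↔ a ∈ x.1 :=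
  ⟨fun h => h le_rfl, fun ha _ hab => x.2.2.1 a ha _ hab⟩

theorem isCIdeal_covD_Iic (x : FComp A) : IsCIdeal covD (Set.Iic x) := by
  refine ⟨fun _ hy _ hzy => hzy.trans hy, ?_⟩
  rintro y U ⟨-, -, hcov⟩ hU b hb
  obtain ⟨a, hab, hya⟩ := hcov (Set.Iic b) (isIdl_Iic_s13 b) fun u hu =>
    ⟨b, le_rfl, (hU hu).trans (le_pf_iff.2 hb)⟩
  exact y.2.2.1 a (le_pf_iff.1 hya) b hab

end FilterCompletion

theorem statement13_general {A : Type*} [Lattice A] :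
    (∀ x : FComp A, genC (covD (A := A)) {x} = {y | y ≤ x}) ∧
    ∀ y z : FComp A, etaC (covD (A := A)) y ≤ etaC (covD (A := A)) z ↔ y ≤ z :=
  ⟨fun x => genC_singleton_eq_Iic (isCIdeal_covD_Iic x),
    fun _ _ => etaC_le_etaC_iff isCIdeal_covD_Iic⟩

/-- `⟨x⟩ = ↓x` for every `x ∈ ℱ(A)`; consequently `η` is an order-embedding. -/
theorem statement13 {A : Type*} [Lattice A] [BoundedOrder A] :
    (∀ x : FComp A, genC (covD (A := A)) {x} = {y | y ≤ x}) ∧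
    ∀ y z : FComp A, etaC (covD (A := A)) y ≤ etaC (covD (A := A)) z ↔ y ≤ z :=
  statement13_general
end

section
/- For every directed subset T of a lattice A, the join ⋁_{b∈T} ⟨↑b⟩ in the lattice of C_A-ideals equals the union ⋃_{b∈T} ⟨↑b⟩; i.e., the union of the principal C_A-ideals of the filters ↑b, b ∈ T, is itself a C_A-ideal. -/
/-!
The `C_A`-ideal generated by `↑b` is just the down-set of `↑b`. A union of such down-sets
over a directed `T` is again closed under covers: a cover `U` of `x` by filters below some
`↑b`, `b ∈ T`, is tested against the ideal `lowerClosure T`, which puts `x` below some `↑a`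
with `a ≤ b ∈ T`. Being a `C_A`-ideal containing every `⟨↑b⟩`, the union is their join.
-/

open Set

lemma CIdl.coe_sSup_image_of_isCIdeal {P ι : Type*} [Preorder P] {C : P → Set P → Prop}
    {f : ι → CIdl C} {s : Set ι} (h : IsCIdeal C (⋃ i ∈ s, (f i).1)) :
    (sSup (f '' s)).1 = ⋃ i ∈ s, (f i).1 := by
  refine subset_antisymm ?_ (iUnion₂_subset fun i hi => le_sSup (mem_image_of_mem f hi))
  have hle : sSup (f '' s) ≤ ⟨_, h⟩ := sSup_le <| forall_mem_image.2 fun i hi =>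
    subset_biUnion_of_mem (u := fun i => (f i).1) hi
  exact hle

lemma genC_singleton_of_isCIdeal_Iic {P : Type*} [Preorder P] {C : P → Set P → Prop} {x : P}
    (h : IsCIdeal C (Iic x)) : genC C {x} = Iic x :=
  subset_antisymm (sInter_subset_of_mem ⟨h, singleton_subset_iff.2 self_mem_Iic⟩)
    fun _ hy => (isCIdeal_genC C {x}).1 x (subset_genC C {x} rfl) _ hy

section FComp

variable {A : Type*} [Preorder A]

lemma pf_mono : Monotone (pf : A → FComp A) :=
  fun _ _ hab _ hc => le_trans hab hc

lemma isIdl_lowerClosure {T : Set A} (hne : T.Nonempty) (hT : DirectedOn (· ≤ ·) T) :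
    IsIdl (lowerClosure T : Set A) := by
  refine ⟨hne.mono subset_lowerClosure, fun a ha b hba => (lowerClosure T).lower hba ha, ?_⟩
  rintro a ⟨b, hb, hab⟩ a' ⟨b', hb', hab'⟩
  obtain ⟨c, hc, hbc, hb'c⟩ := hT b hb b' hb'
  exact ⟨c, subset_lowerClosure hc, hab.trans hbc, hab'.trans hb'c⟩

lemma isCIdeal_biUnion_Iic_pf {T : Set A} (hT : DirectedOn (· ≤ ·) T) :
    IsCIdeal covD (⋃ b ∈ T, Iic (pf b)) := by
  refine ⟨fun x hx y hyx => ?_, ?_⟩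
  · obtain ⟨b, hb, hxb⟩ := mem_iUnion₂.1 hx
    exact mem_iUnion₂.2 ⟨b, hb, hyx.trans hxb⟩
  rintro x U ⟨⟨u, hu⟩, -, hcov⟩ hsub
  obtain ⟨b, hb, -⟩ := mem_iUnion₂.1 (hsub hu)
  have hU : ∀ x' ∈ U, ∃ a ∈ (lowerClosure T : Set A), x' ≤ pf a := fun x' hx' => by
    obtain ⟨b', hb', hx'b'⟩ := mem_iUnion₂.1 (hsub hx')
    exact ⟨b', subset_lowerClosure hb', hx'b'⟩
  obtain ⟨a, ⟨c, hc, hac⟩, hxa⟩ := hcov _ (isIdl_lowerClosure ⟨b, hb⟩ hT) hU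
  exact mem_iUnion₂.2 ⟨c, hc, hxa.trans (pf_mono hac)⟩

lemma coe_etaC_pf (b : A) : (etaC covD (pf b)).1 = Iic (pf b) := by
  refine genC_singleton_of_isCIdeal_Iic ?_
  simpa only [biUnion_singleton] using isCIdeal_biUnion_Iic_pf (directedOn_singleton b)

end FComp

theorem statement15_general {A : Type*} [Lattice A]
    (T : Set A) (hdir : DirectedOn (· ≤ ·) T) :
    IsCIdeal (covD (A := A)) (⋃ b ∈ T, (etaC (covD (A := A)) (pf b)).1) ∧
    (sSup ((fun b => etaC (covD (A := A)) (pf b)) '' T)).1 =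
      ⋃ b ∈ T, (etaC (covD (A := A)) (pf b)).1 := by
  have hIdeal : IsCIdeal (covD (A := A)) (⋃ b ∈ T, (etaC (covD (A := A)) (pf b)).1) := by
    simpa only [coe_etaC_pf] using isCIdeal_biUnion_Iic_pf hdir
  exact ⟨hIdeal, CIdl.coe_sSup_image_of_isCIdeal hIdeal⟩

/-- for directed `T ⊆ A`, the join of the `C_A`-ideals `⟨↑b⟩`, `b ∈ T`, is
their union; i.e. this union is itself a `C_A`-ideal. -/
theorem statement15 {A : Type*} [Lattice A] [BoundedOrder A]
    (T : Set A) (hT : T.Nonempty) (hdir : DirectedOn (· ≤ ·) T) :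
    IsCIdeal (covD (A := A)) (⋃ b ∈ T, (etaC (covD (A := A)) (pf b)).1) ∧
    (sSup ((fun b => etaC (covD (A := A)) (pf b)) '' T)).1 =
      ⋃ b ∈ T, (etaC (covD (A := A)) (pf b)).1 :=
  statement15_general T hdir
end
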